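/- Let X be a quasi-median graph whose crossing graph ΔX admits a graph factor system. Then there is a uniform bound on the size of any collection of pairwise-crossing hyperplanes of X; consequently every prism (product of maximal cliques) of X has uniformly bounded diameter. -/

import Mathlib

/-!
Pairwise crossing hyperplanes `H₀, …, Hₙ` give the chain
`lk H₁ ∩ ⋯ ∩ lk Hₙ ⊊ lk H₂ ∩ ⋯ ∩ lk Hₙ ⊊ ⋯ ⊊ lk Hₙ` in the factor system: each term is nonempty
because it contains the preceding `Hᵢ`, and the inclusions are strict because no hyperplane lies in
its own link. So the chain bound of the factor system bounds the cliques of `ΔX`.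

Two vertices `φ f`, `φ g` of a prism are at distance at most the Hamming distance of `f` and `g`,
and the edges at `φ f` along the coordinates where `f` and `g` differ pairwise span squares. Their
hyperplanes therefore pairwise cross, and they are distinct: in a quasi-median graph, the partition
of the vertices by their gates in the maximal clique of an edge is preserved across triangles and
squares, hence depends only on the hyperplane, while the two edges at a corner of a square induce
different partitions.
-/

variable {V : Type*}

/-- Two edges (with endpoints in `S`) are two sides of a triangle. -/
def TriSides (G : SimpleGraph V) (S : Set V) (e f : Sym2 V) : Prop :=
  ∃ a b c, a ∈ S ∧ b ∈ S ∧ c ∈ S ∧ e = s(a, b) ∧ f = s(a, c) ∧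
    G.Adj a b ∧ G.Adj a c ∧ G.Adj b c

/-- Two edges (with endpoints in `S`) are opposite sides of an induced square. -/
def SquareOpp (G : SimpleGraph V) (S : Set V) (e f : Sym2 V) : Prop :=
  ∃ a b c d, a ∈ S ∧ b ∈ S ∧ c ∈ S ∧ d ∈ S ∧ e = s(a, b) ∧ f = s(c, d) ∧
    G.Adj a b ∧ G.Adj c d ∧ G.Adj a c ∧ G.Adj b d ∧
    ¬ G.Adj a d ∧ ¬ G.Adj b c ∧ a ≠ d ∧ b ≠ c

/-- Parallelism of edges: the equivalence relation generated by being two sides of a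
triangle or opposite sides of an induced square.  Hyperplanes are its classes. -/
def Parallel (G : SimpleGraph V) (S : Set V) : Sym2 V → Sym2 V → Prop :=
  Relation.EqvGen (fun e f => TriSides G S e f ∨ SquareOpp G S e f)

/-- Two edges form a corner of an induced square. -/
def SquareCorner (G : SimpleGraph V) (S : Set V) (e f : Sym2 V) : Prop :=
  ∃ a b c d, a ∈ S ∧ b ∈ S ∧ c ∈ S ∧ d ∈ S ∧ e = s(a, b) ∧ f = s(a, c) ∧
    G.Adj a b ∧ G.Adj a c ∧ G.Adj b d ∧ G.Adj c d ∧ ¬ G.Adj a d ∧ ¬ G.Adj b c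

/-- The hyperplanes dual to `e` and to `f` cross: some representatives of their
parallelism classes form a corner of an induced square. -/
def Crosses (G : SimpleGraph V) (S : Set V) (e f : Sym2 V) : Prop :=
  ∃ e' f', Parallel G S e e' ∧ Parallel G S f f' ∧ SquareCorner G S e' f'

/-- `(y₁,y₂,y₃)` satisfies the conditions of a `k`-quasi-median of `(x₁,x₂,x₃)`,
except minimality of `k`: `yᵢ, yⱼ` lie on a common geodesic from `xᵢ` to `xⱼ` and
all pairwise distances equal `k`. -/
def IsQMTriple (G : SimpleGraph V) (x₁ x₂ x₃ y₁ y₂ y₃ : V) (k : ℕ) : Prop :=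
  G.dist x₁ y₁ + G.dist y₁ y₂ + G.dist y₂ x₂ = G.dist x₁ x₂ ∧
  G.dist x₁ y₁ + G.dist y₁ y₃ + G.dist y₃ x₃ = G.dist x₁ x₃ ∧
  G.dist x₂ y₂ + G.dist y₂ y₃ + G.dist y₃ x₃ = G.dist x₂ x₃ ∧
  G.dist y₁ y₂ = k ∧ G.dist y₁ y₃ = k ∧ G.dist y₂ y₃ = k

/-- A quasi-median of a triple: a `k`-quasi-median with `k` minimal. -/
def IsQuasiMedianTriple (G : SimpleGraph V) (x₁ x₂ x₃ y₁ y₂ y₃ : V) : Prop :=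
  ∃ k, IsQMTriple G x₁ x₂ x₃ y₁ y₂ y₃ k ∧
    ∀ k' z₁ z₂ z₃, IsQMTriple G x₁ x₂ x₃ z₁ z₂ z₃ k' → k ≤ k'

/-- A geodesically convex set of vertices. -/
def GraphConvex (G : SimpleGraph V) (S : Set V) : Prop :=
  ∀ x ∈ S, ∀ y ∈ S, ∀ z, G.dist x z + G.dist z y = G.dist x y → z ∈ S

/-- The convex hull of a set of vertices. -/
def graphConvexHull (G : SimpleGraph V) (S : Set V) : Set V :=
  ⋂₀ {T | S ⊆ T ∧ GraphConvex G T}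

/-- A `3`-cube in `G`: an injective map from the vertices of the combinatorial
`3`-cube, with adjacency exactly at Hamming distance `1`. -/
def IsThreeCube (G : SimpleGraph V) (g : Fin 2 × Fin 2 × Fin 2 → V) : Prop :=
  Function.Injective g ∧ ∀ u v, G.Adj (g u) (g v) ↔
    ((if u.1 = v.1 then 0 else 1) + (if u.2.1 = v.2.1 then 0 else 1) +
      (if u.2.2 = v.2.2 then 0 else 1) = (1 : ℕ))

/-- `G` is a quasi-median graph: every triple has a unique quasi-median, `G` has no
induced `K₄⁻`, and every isometrically embedded `6`-cycle has a `3`-cube as its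
convex hull. -/
def IsQuasiMedian (G : SimpleGraph V) : Prop :=
  (∀ x₁ x₂ x₃ : V, ∃ y₁ y₂ y₃ : V, IsQuasiMedianTriple G x₁ x₂ x₃ y₁ y₂ y₃ ∧
    ∀ z₁ z₂ z₃, IsQuasiMedianTriple G x₁ x₂ x₃ z₁ z₂ z₃ →
      z₁ = y₁ ∧ z₂ = y₂ ∧ z₃ = y₃) ∧
  (¬ ∃ a b c d : V, G.Adj a b ∧ G.Adj a c ∧ G.Adj a d ∧ G.Adj b c ∧ G.Adj b d ∧
    ¬ G.Adj c d ∧ c ≠ d) ∧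
  (∀ f : Fin 6 → V,
    (∀ i j : Fin 6, G.dist (f i) (f j) =
      min (((i.val : ℤ) - (j.val : ℤ)).natAbs) (6 - ((i.val : ℤ) - (j.val : ℤ)).natAbs)) →
    ∃ g : Fin 2 × Fin 2 × Fin 2 → V, IsThreeCube G g ∧
      graphConvexHull G (Set.range f) = Set.range g)

/-- A graph factor system on a graph `G` (with vertex set `X`). -/
def IsGraphFactorSystem (G : SimpleGraph V) (X : Set V) (𝔉 : Set (Set V)) : Prop :=
  X ∈ 𝔉 ∧
  (∀ F ∈ 𝔉, F ⊆ X) ∧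
  (∀ v ∈ X, ({u ∈ X | G.Adj v u}).Nonempty → {u ∈ X | G.Adj v u} ∈ 𝔉) ∧
  (∀ A ∈ 𝔉, ∀ B ∈ 𝔉, (A ∩ B).Nonempty → A ∩ B ∈ 𝔉) ∧
  ∃ n : ℕ, 0 < n ∧ ∀ (k : ℕ) (c : Fin k → Set V),
    StrictMono c → (∀ i, c i ∈ 𝔉) → k < n

lemma SquareCorner.symm {G : SimpleGraph V} {S : Set V} {e f : Sym2 V}
    (h : SquareCorner G S e f) : SquareCorner G S f e := by
  obtain ⟨a, b, c, d, ha, hb, hc, hd, he, hf, h1, h2, h3, h4, h5, h6⟩ := h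
  exact ⟨a, c, b, d, ha, hc, hb, hd, hf, he, h2, h1, h4, h3, h5, fun h => h6 h.symm⟩

/-- Parallelism as a setoid on the edges of `G`. -/
def parallelSetoid (G : SimpleGraph V) : Setoid G.edgeSet :=
  ⟨fun e f => Parallel G Set.univ e.1 f.1,
    ⟨fun _ => Relation.EqvGen.refl _, Relation.EqvGen.symm _ _,
      fun h h' => Relation.EqvGen.trans _ _ _ h h'⟩⟩

/-- The hyperplanes of `G`: parallelism classes of edges. -/
def Hyp (G : SimpleGraph V) := Quotient (parallelSetoid G)

/-- The crossing graph `ΔG`: vertices are hyperplanes, adjacent when they cross. -/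
def crossingGraph (G : SimpleGraph V) : SimpleGraph (Hyp G) where
  Adj K K' := K ≠ K' ∧ ∃ e f : G.edgeSet,
    Quotient.mk (parallelSetoid G) e = K ∧ Quotient.mk (parallelSetoid G) f = K' ∧
    SquareCorner G Set.univ e.1 f.1
  symm := ⟨fun K K' ⟨hne, e, f, he, hf, hsq⟩ => ⟨hne.symm, f, e, hf, he, hsq.symm⟩⟩
  loopless := ⟨fun K h => h.1 rfl⟩

/-- A prism of `G`: the image of a product of maximal cliques, with adjacency exactly
at Hamming distance `1`. -/
def IsPrism (G : SimpleGraph V) (P : Set V) : Prop :=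
  ∃ (k : ℕ) (S : Fin k → Set V) (φ : (∀ i, S i) → V),
    (∀ i, G.IsClique (S i)) ∧
    (∀ i, ∀ t : Set V, G.IsClique t → S i ⊆ t → t = S i) ∧
    Function.Injective φ ∧ Set.range φ = P ∧
    ∀ f g : ∀ i, S i, f ≠ g →
      (G.Adj (φ f) (φ g) ↔ ∃! i : Fin k, (f i : V) ≠ (g i : V))

open SimpleGraph

section QuasiMedian

variable {G : SimpleGraph V}

def IsMedian (G : SimpleGraph V) (x y z m : V) : Prop :=
  G.dist x m + G.dist m y = G.dist x y ∧ G.dist x m + G.dist m z = G.dist x z ∧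
    G.dist y m + G.dist m z = G.dist y z

lemma IsMedian.isQuasiMedianTriple {x y z m : V} (h : IsMedian G x y z m) :
    IsQuasiMedianTriple G x y z m m m :=
  ⟨0, ⟨by simpa using h.1, by simpa using h.2.1, by simpa using h.2.2, dist_self, dist_self,
    dist_self⟩, fun _ _ _ _ _ => Nat.zero_le _⟩

namespace IsQuasiMedian

lemma eq_of_isMedian (hqm : IsQuasiMedian G) {x y z p q : V} (hp : IsMedian G x y z p)
    (hq : IsMedian G x y z q) : p = q := by
  obtain ⟨_, _, _, -, huniq⟩ := hqm.1 x y z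
  exact (huniq p p p hp.isQuasiMedianTriple).1.trans (huniq q q q hq.isQuasiMedianTriple).1.symm

lemma eq_of_dist_eq_zero (hqm : IsQuasiMedian G) {x y : V} (h : G.dist x y = 0) : x = y :=
  hqm.eq_of_isMedian (x := x) (y := x) (z := x) (by simp [IsMedian])
    (by simp [IsMedian, h, dist_comm (u := y)])

lemma reachable (hqm : IsQuasiMedian G) (x y : V) : G.Reachable x y := by
  by_contra h
  exact h (hqm.eq_of_dist_eq_zero (dist_eq_zero_of_not_reachable h) ▸ Reachable.refl x)

lemma dist_triangle (hqm : IsQuasiMedian G) (x y z : V) :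
    G.dist x z ≤ G.dist x y + G.dist y z :=
  (hqm.reachable x y).dist_triangle_left z

lemma one_le_dist (hqm : IsQuasiMedian G) {x y : V} (h : x ≠ y) : 1 ≤ G.dist x y :=
  Nat.one_le_iff_ne_zero.mpr fun h0 => h (hqm.eq_of_dist_eq_zero h0)

lemma dist_eq_two (hqm : IsQuasiMedian G) {x y z : V} (hne : x ≠ z) (hn : ¬ G.Adj x z)
    (hxy : G.Adj x y) (hyz : G.Adj y z) : G.dist x z = 2 := by
  have := hqm.dist_triangle x y z
  have := hqm.one_le_dist hne
  have : G.dist x z ≠ 1 := fun h => hn (dist_eq_one_iff_adj.mp h)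
  rw [dist_eq_one_iff_adj.mpr hxy, dist_eq_one_iff_adj.mpr hyz] at *
  omega

/-- No induced `K₄⁻`. -/
lemma adj_of_adj_of_common_adj (hqm : IsQuasiMedian G) {a b c d : V} (hab : G.Adj a b)
    (hac : G.Adj a c) (had : G.Adj a d) (hbc : G.Adj b c) (hbd : G.Adj b d) (hcd : c ≠ d) :
    G.Adj c d := by
  by_contra h
  exact hqm.2.1 ⟨a, b, c, d, hab, hac, had, hbc, hbd, h, hcd⟩

lemma triangle_condition (hqm : IsQuasiMedian G) {u v w : V} (hvw : G.Adj v w)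
    (h : G.dist u v = G.dist u w) :
    ∃ z, G.Adj z v ∧ G.Adj z w ∧ G.dist u z + 1 = G.dist u v := by
  -- the quasi-median of `u, v, w` has size `1` and sits at `v, w`, by parity
  obtain ⟨y₁, y₂, y₃, ⟨k, ⟨e₁, e₂, e₃, d₁₂, d₁₃, d₂₃⟩, -⟩, -⟩ := hqm.1 u v w
  have := dist_comm (G := G) (u := v) (v := y₂)
  rw [dist_eq_one_iff_adj.mpr hvw] at e₃
  obtain ⟨rfl, h₂, h₃⟩ : k = 1 ∧ G.dist y₂ v = 0 ∧ G.dist y₃ w = 0 := by omega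
  obtain rfl := hqm.eq_of_dist_eq_zero h₂
  obtain rfl := hqm.eq_of_dist_eq_zero h₃
  exact ⟨y₁, dist_eq_one_iff_adj.mp d₁₂, dist_eq_one_iff_adj.mp d₁₃, by simp at e₁; omega⟩

lemma exists_common_adj_of_dist_eq_two (hqm : IsQuasiMedian G) {v a d : V}
    (had : G.dist a d = 2) (h : G.dist v d = G.dist v a + 1) :
    ∃ z, G.Adj z a ∧ G.Adj z d ∧ G.dist v z = G.dist v a := by
  obtain ⟨y₁, y₂, y₃, ⟨k, ⟨e₁, e₂, e₃, d₁₂, d₁₃, d₂₃⟩, -⟩, -⟩ := hqm.1 v a d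
  have := dist_comm (G := G) (u := a) (v := y₂)
  obtain ⟨rfl, h₂, h₃⟩ : k = 1 ∧ G.dist y₂ a = 0 ∧ G.dist y₃ d = 1 := by omega
  obtain rfl := hqm.eq_of_dist_eq_zero h₂
  have := hqm.dist_triangle v y₁ y₃
  have := hqm.dist_triangle v y₃ d
  exact ⟨y₃, (dist_eq_one_iff_adj.mp d₂₃).symm, dist_eq_one_iff_adj.mp h₃, by omega⟩

end IsQuasiMedian

end QuasiMedian

section EdgeClique

variable {G : SimpleGraph V}

/-- In a graph without induced `K₄⁻` this is the unique maximal clique containing the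
edge `ab`. -/
def edgeClique (G : SimpleGraph V) (a b : V) : Set V :=
  {x | x = a ∨ x = b ∨ (G.Adj x a ∧ G.Adj x b)}

lemma edgeClique_comm (a b : V) : edgeClique G a b = edgeClique G b a := by
  ext x
  simp only [edgeClique, Set.mem_ofPred_eq]
  tauto

lemma left_mem_edgeClique (a b : V) : a ∈ edgeClique G a b := Or.inl rfl

lemma right_mem_edgeClique (a b : V) : b ∈ edgeClique G a b := Or.inr (Or.inl rfl)

lemma mem_edgeClique_of_adj {a b x : V} (ha : G.Adj x a) (hb : G.Adj x b) :
    x ∈ edgeClique G a b :=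
  Or.inr (Or.inr ⟨ha, hb⟩)

namespace IsQuasiMedian

lemma isClique_edgeClique (hqm : IsQuasiMedian G) {a b : V} (hab : G.Adj a b) :
    G.IsClique (edgeClique G a b) := by
  rintro x (rfl | rfl | ⟨hxa, hxb⟩) y (rfl | rfl | ⟨hya, hyb⟩) hne
  all_goals first
    | exact absurd rfl hne
    | assumption
    | exact Adj.symm ‹_›
    | exact hqm.adj_of_adj_of_common_adj hab hxa.symm hya.symm hxb.symm hyb.symm hne

lemma mem_edgeClique_of_adj_of_adj (hqm : IsQuasiMedian G) {a b x y z : V} (hab : G.Adj a b)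
    (hx : x ∈ edgeClique G a b) (hy : y ∈ edgeClique G a b) (hxy : x ≠ y)
    (hzx : G.Adj z x) (hzy : G.Adj z y) : z ∈ edgeClique G a b := by
  have hK := hqm.isClique_edgeClique hab
  have key : ∀ c ∈ edgeClique G a b, z = c ∨ G.Adj z c := by
    intro c hc
    by_cases hzc : z = c
    · exact Or.inl hzc
    by_cases hcx : c = x
    · exact Or.inr (hcx ▸ hzx)
    by_cases hcy : c = y
    · exact Or.inr (hcy ▸ hzy)
    exact Or.inr (hqm.adj_of_adj_of_common_adj (hK hx hy hxy) hzx.symm (hK hx hc (Ne.symm hcx))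
      hzy.symm (hK hy hc (Ne.symm hcy)) hzc)
  rcases key a (left_mem_edgeClique a b) with rfl | hza
  · exact left_mem_edgeClique z b
  rcases key b (right_mem_edgeClique a b) with rfl | hzb
  · exact right_mem_edgeClique a z
  exact mem_edgeClique_of_adj hza hzb

lemma edgeClique_eq_of_adj (hqm : IsQuasiMedian G) {a b c : V} (hab : G.Adj a b)
    (hac : G.Adj a c) (hbc : G.Adj b c) : edgeClique G a b = edgeClique G a c := by
  have key : ∀ {b c}, G.Adj a b → G.Adj a c → G.Adj b c →
      edgeClique G a b ⊆ edgeClique G a c := by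
    intro b c hab hac hbc x hx
    have hcK : c ∈ edgeClique G a b := mem_edgeClique_of_adj hac.symm hbc.symm
    by_cases hxa : x = a
    · exact hxa ▸ left_mem_edgeClique (G := G) a c
    by_cases hxc : x = c
    · exact hxc ▸ right_mem_edgeClique (G := G) a c
    have hK := hqm.isClique_edgeClique hab
    exact mem_edgeClique_of_adj (hK hx (left_mem_edgeClique a b) hxa) (hK hx hcK hxc)
  exact (key hab hac hbc).antisymm (key hac hab hbc.symm)

end IsQuasiMedian

end EdgeClique

section Gate

variable {G : SimpleGraph V}

def IsGate (G : SimpleGraph V) (K : Set V) (g v : V) : Prop :=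
  g ∈ K ∧ ∀ x ∈ K, x ≠ g → G.dist v x = G.dist v g + 1

lemma IsGate.unique {K : Set V} {g g' v : V} (h : IsGate G K g v) (h' : IsGate G K g' v) :
    g = g' := by
  by_contra hne
  have := h.2 g' h'.1 (Ne.symm hne)
  have := h'.2 g h.1 hne
  omega

lemma isGate_self {a b : V} (hab : G.Adj a b) : IsGate G (edgeClique G a b) a a := by
  refine ⟨left_mem_edgeClique a b, ?_⟩
  rintro x (rfl | rfl | ⟨hxa, -⟩) hne
  · exact absurd rfl hne
  · rw [dist_self, dist_eq_one_iff_adj.mpr hab]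
  · rw [dist_self, dist_eq_one_iff_adj.mpr hxa.symm]

namespace IsQuasiMedian

/-- A closest vertex is a gate, by the triangle condition. -/
lemma exists_isGate (hqm : IsQuasiMedian G) {a b : V} (hab : G.Adj a b) (v : V) :
    ∃ g, IsGate G (edgeClique G a b) g v := by
  set K := edgeClique G a b
  obtain ⟨g, hg, hmin⟩ : ∃ g ∈ K, ∀ x ∈ K, G.dist v g ≤ G.dist v x :=
    ⟨_, Function.argminOn_mem _ _ ⟨a, left_mem_edgeClique a b⟩,
      fun x hx => Function.argminOn_le (G.dist v) K hx⟩
  refine ⟨g, hg, fun x hx hxg => ?_⟩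
  have hgx := hqm.isClique_edgeClique hab hg hx (Ne.symm hxg)
  have := hqm.dist_triangle v g x
  have := hmin x hx
  rw [dist_eq_one_iff_adj.mpr hgx] at *
  by_contra hne
  obtain ⟨z, hzg, hzx, hz⟩ :=
    hqm.triangle_condition hgx (by omega : G.dist v g = G.dist v x)
  have := hmin z (hqm.mem_edgeClique_of_adj_of_adj hab hg hx (Ne.symm hxg) hzg hzx)
  omega

lemma isGate_of_not_adj (hqm : IsQuasiMedian G) {a b c : V} (hab : G.Adj a b)
    (hac : G.Adj a c) (hbc : ¬ G.Adj b c) (hne : b ≠ c) : IsGate G (edgeClique G a b) a c := by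
  refine ⟨left_mem_edgeClique a b, ?_⟩
  rw [dist_eq_one_iff_adj.mpr hac.symm]
  rintro x (rfl | rfl | ⟨hxa, hxb⟩) hxa'
  · exact absurd rfl hxa'
  · exact hqm.dist_eq_two (Ne.symm hne) (fun h => hbc h.symm) hac.symm hab
  · have hxc : ¬ G.Adj x c := fun h =>
      hbc (hqm.adj_of_adj_of_common_adj hxa.symm hab hac hxb h hne)
    have hxc' : x ≠ c := fun h => hbc (h ▸ hxb.symm)
    exact hqm.dist_eq_two (Ne.symm hxc') (fun h => hxc h.symm) hac.symm hxa.symm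

end IsQuasiMedian

lemma IsGate.dist_le_of_dist_eq_two (hqm : IsQuasiMedian G) {a b v y : V}
    (hab : G.Adj a b) (hg : IsGate G (edgeClique G a b) a v) (hya : G.dist y a = 2)
    (hyb : G.dist y b = 2) : G.dist v a ≤ G.dist v y := by
  obtain ⟨z, hza, hzb, hyz⟩ := hqm.triangle_condition hab (hya.trans hyb.symm)
  have := hg.2 z (mem_edgeClique_of_adj hza hzb) hza.ne
  have := hqm.dist_triangle v y z
  omega

end Gate

section Square

variable {G : SimpleGraph V}

/-- An induced square with sides `ab`, `bd`, `dc`, `ca`. -/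
structure InducedSquare (G : SimpleGraph V) (a b c d : V) : Prop where
  adj_ab : G.Adj a b
  adj_cd : G.Adj c d
  adj_ac : G.Adj a c
  adj_bd : G.Adj b d
  not_adj_ad : ¬ G.Adj a d
  not_adj_bc : ¬ G.Adj b c
  ne_ad : a ≠ d
  ne_bc : b ≠ c

namespace InducedSquare

variable {a b c d v : V}

lemma swap (sq : InducedSquare G a b c d) : InducedSquare G b a d c :=
  ⟨sq.adj_ab.symm, sq.adj_cd.symm, sq.adj_bd, sq.adj_ac, sq.not_adj_bc, sq.not_adj_ad, sq.ne_bc,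
    sq.ne_ad⟩

lemma flip (sq : InducedSquare G a b c d) : InducedSquare G c d a b :=
  ⟨sq.adj_cd, sq.adj_ab, sq.adj_ac.symm, sq.adj_bd.symm, fun h => sq.not_adj_bc h.symm,
    fun h => sq.not_adj_ad h.symm, sq.ne_bc.symm, sq.ne_ad.symm⟩

lemma not_adj_of_adj_of_adj (hqm : IsQuasiMedian G) (sq : InducedSquare G a b c d) {y : V}
    (hyc : G.Adj y c) (hyd : G.Adj y d) : ¬ G.Adj y a := fun hya =>
  sq.not_adj_ad (hqm.adj_of_adj_of_common_adj hyc.symm sq.adj_ac.symm sq.adj_cd hya hyd sq.ne_ad)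

/-- Otherwise `a` and `d` would be two distinct medians of `r`, `b`, `c`. -/
lemma dist_ne_of_dist_eq_succ (hqm : IsQuasiMedian G) (sq : InducedSquare G a b c d) {r : V}
    (hb : G.dist r b = G.dist r a + 1) (hc : G.dist r c = G.dist r a + 1) :
    G.dist r d ≠ G.dist r a := by
  intro hd
  have hab : G.dist a b = 1 := dist_eq_one_iff_adj.mpr sq.adj_ab
  have hac : G.dist a c = 1 := dist_eq_one_iff_adj.mpr sq.adj_ac
  have hdb : G.dist d b = 1 := dist_eq_one_iff_adj.mpr sq.adj_bd.symm
  have hdc : G.dist d c = 1 := dist_eq_one_iff_adj.mpr sq.adj_cd.symm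
  have hbc : G.dist b c = 2 := hqm.dist_eq_two sq.ne_bc sq.not_adj_bc sq.adj_ab.symm sq.adj_ac
  have : G.dist b a = 1 := dist_eq_one_iff_adj.mpr sq.adj_ab.symm
  have : G.dist b d = 1 := dist_eq_one_iff_adj.mpr sq.adj_bd
  exact sq.ne_ad (hqm.eq_of_isMedian (x := r) (y := b) (z := c)
    ⟨by omega, by omega, by omega⟩ ⟨by omega, by omega, by omega⟩)

lemma not_isGate_right (hqm : IsQuasiMedian G) (sq : InducedSquare G a b c d)
    (hg : IsGate G (edgeClique G a b) a v) : ¬ IsGate G (edgeClique G c d) d v := by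
  intro hd
  have hvb := hg.2 b (right_mem_edgeClique a b) sq.adj_ab.ne'
  have hvc := hd.2 c (left_mem_edgeClique c d) sq.adj_cd.ne
  have hvac := hqm.dist_triangle v a c
  have hvdb := hqm.dist_triangle v d b
  rw [dist_eq_one_iff_adj.mpr sq.adj_ac] at hvac
  rw [dist_eq_one_iff_adj.mpr sq.adj_bd.symm] at hvdb
  exact sq.dist_ne_of_dist_eq_succ hqm hvb (by omega) (by omega)

lemma not_isGate_of_adj_of_adj (hqm : IsQuasiMedian G) (sq : InducedSquare G a b c d)
    (hg : IsGate G (edgeClique G a b) a v) {y : V} (hyc : G.Adj y c) (hyd : G.Adj y d) :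
    ¬ IsGate G (edgeClique G c d) y v := by
  intro hy
  have hya := sq.not_adj_of_adj_of_adj hqm hyc hyd
  have hyb := sq.swap.not_adj_of_adj_of_adj hqm hyd hyc
  have hvb := hg.2 b (right_mem_edgeClique a b) sq.adj_ab.ne'
  have hvc := hy.2 c (left_mem_edgeClique c d) hyc.ne'
  have hvd := hy.2 d (right_mem_edgeClique c d) hyd.ne'
  have := hqm.dist_triangle v a c
  rw [dist_eq_one_iff_adj.mpr sq.adj_ac] at this
  rcases (by omega : G.dist v y < G.dist v a ∨ G.dist v y = G.dist v a) with hlt | heq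
  · have := hg.dist_le_of_dist_eq_two hqm sq.adj_ab
      (hqm.dist_eq_two (fun h => sq.not_adj_ad (h ▸ hyd)) hya hyc sq.adj_ac.symm)
      (hqm.dist_eq_two (fun h => sq.not_adj_bc (h ▸ hyc)) hyb hyd sq.adj_bd.symm)
    omega
  · -- a common neighbour `z` of `a` and `d` as close to `v` as `a` yields a second median
    have had := hqm.dist_eq_two sq.ne_ad sq.not_adj_ad sq.adj_ab sq.adj_bd
    obtain ⟨z, hza, hzd, hvz⟩ := hqm.exists_common_adj_of_dist_eq_two (v := v) had (by omega)
    have hzb : ¬ G.Adj z b := fun h => by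
      have := hg.2 z (mem_edgeClique_of_adj hza h) hza.ne
      omega
    have hzc : ¬ G.Adj z c := fun h => by
      have := hy.2 z (mem_edgeClique_of_adj h hzd) fun e => hya (e ▸ hza)
      omega
    have hzb' := hqm.dist_eq_two (fun e => by rw [e] at hvz; omega) hzb hza sq.adj_ab
    have hzc' := hqm.dist_eq_two (fun e => by rw [e] at hvz; omega) hzc hza sq.adj_ac
    have hza' : G.dist z a = 1 := dist_eq_one_iff_adj.mpr hza
    exact sq.dist_ne_of_dist_eq_succ hqm (by omega) (by omega)
      ((dist_eq_one_iff_adj.mpr hzd).trans hza'.symm)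

lemma isGate (hqm : IsQuasiMedian G) (sq : InducedSquare G a b c d)
    (hg : IsGate G (edgeClique G a b) a v) : IsGate G (edgeClique G c d) c v := by
  obtain ⟨g, hgate⟩ := hqm.exists_isGate sq.adj_cd v
  rcases hgate.1 with rfl | rfl | ⟨hgc, hgd⟩
  · exact hgate
  · exact absurd hgate (sq.not_isGate_right hqm hg)
  · exact absurd hgate (sq.not_isGate_of_adj_of_adj hqm hg hgc hgd)

end InducedSquare

end Square

section Parallel

variable {G : SimpleGraph V}

def sym2EdgeClique (G : SimpleGraph V) : Sym2 V → Set V :=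
  Sym2.lift ⟨edgeClique G, edgeClique_comm⟩

/-- For an edge clique, the classes of this relation are the sectors of its hyperplane. -/
def SameGate (G : SimpleGraph V) (K : Set V) (u w : V) : Prop :=
  ∃ g, IsGate G K g u ∧ IsGate G K g w

namespace InducedSquare

variable {a b c d : V}

lemma sameGate_of_sameGate (hqm : IsQuasiMedian G) (sq : InducedSquare G a b c d) {u w : V}
    (h : SameGate G (edgeClique G a b) u w) : SameGate G (edgeClique G c d) u w := by
  obtain ⟨g, hu, hw⟩ := h
  rcases hu.1 with rfl | rfl | ⟨hga, hgb⟩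
  · exact ⟨c, sq.isGate hqm hu, sq.isGate hqm hw⟩
  · rw [edgeClique_comm] at hu hw
    rw [edgeClique_comm]
    exact ⟨d, sq.swap.isGate hqm hu, sq.swap.isGate hqm hw⟩
  · -- `g` spans a new square with the edge `ac` and a common neighbour of `c` and `d`
    have hgc := sq.flip.not_adj_of_adj_of_adj hqm hga hgb
    have hgd := sq.flip.swap.not_adj_of_adj_of_adj hqm hgb hga
    have hgc' : g ≠ c := fun e => sq.not_adj_bc (e ▸ hgb).symm
    have hgd' : g ≠ d := fun e => sq.not_adj_ad (e ▸ hga).symm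
    have hgc₂ := hqm.dist_eq_two hgc' hgc hga sq.adj_ac
    obtain ⟨y, hyc, hyd, hgy⟩ := hqm.triangle_condition sq.adj_cd
      (hgc₂.trans (hqm.dist_eq_two hgd' hgd hgb sq.adj_bd).symm)
    have hgy : G.Adj g y := dist_eq_one_iff_adj.mp (by omega)
    have sq' : InducedSquare G g a y c :=
      ⟨hga, hyc, hgy, sq.adj_ac, hgc, fun h => sq.not_adj_of_adj_of_adj hqm hyc hyd h.symm, hgc',
        fun e => sq.not_adj_ad (e ▸ hyd)⟩
    rw [hqm.edgeClique_eq_of_adj sq.adj_ab hga.symm hgb.symm, edgeClique_comm] at hu hw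
    rw [hqm.edgeClique_eq_of_adj sq.adj_cd hyc.symm hyd.symm, edgeClique_comm]
    exact ⟨y, sq'.isGate hqm hu, sq'.isGate hqm hw⟩

lemma sameGate_eq (hqm : IsQuasiMedian G) (sq : InducedSquare G a b c d) :
    SameGate G (edgeClique G a b) = SameGate G (edgeClique G c d) := by
  ext u w
  exact ⟨sq.sameGate_of_sameGate hqm, sq.flip.sameGate_of_sameGate hqm⟩

end InducedSquare

lemma Parallel.sameGate_eq (hqm : IsQuasiMedian G) {e f : Sym2 V} (h : Parallel G Set.univ e f) :
    SameGate G (sym2EdgeClique G e) = SameGate G (sym2EdgeClique G f) := by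
  induction h with
  | rel e f hr =>
    rcases hr with ⟨a, b, c, -, -, -, rfl, rfl, hab, hac, hbc⟩ |
      ⟨a, b, c, d, -, -, -, -, rfl, rfl, hab, hcd, hac, hbd, had, hbc, had', hbc'⟩
    · exact congrArg (SameGate G) (hqm.edgeClique_eq_of_adj hab hac hbc)
    · exact InducedSquare.sameGate_eq hqm ⟨hab, hcd, hac, hbd, had, hbc, had', hbc'⟩
  | refl => rfl
  | symm _ _ _ ih => exact ih.symm
  | trans _ _ _ _ _ ih₁ ih₂ => exact ih₁.trans ih₂

/-- Hyperplanes do not self-cross: the gate of `c` in the clique of `ab` is `a`, but in the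
clique of `ac` it is `c`. -/
lemma not_parallel_of_not_adj (hqm : IsQuasiMedian G) {a b c : V} (hab : G.Adj a b)
    (hac : G.Adj a c) (hbc : ¬ G.Adj b c) (hne : b ≠ c) :
    ¬ Parallel G Set.univ s(a, b) s(a, c) := by
  intro h
  have hsame : SameGate G (edgeClique G a b) a c :=
    ⟨a, isGate_self hab, hqm.isGate_of_not_adj hab hac hbc hne⟩
  obtain ⟨g, hga, hgc⟩ : SameGate G (edgeClique G a c) a c := (Parallel.sameGate_eq hqm h) ▸ hsame
  have hcc : IsGate G (edgeClique G a c) c c := edgeClique_comm (G := G) c a ▸ isGate_self hac.symm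
  exact hac.ne ((hga.unique (isGate_self hac)).symm.trans (hgc.unique hcc))

end Parallel

section Prism

variable {G : SimpleGraph V} {ι : Type*} {β : ι → Type*}

lemma dist_le_hammingDist [Fintype ι] [DecidableEq ι] [∀ i, DecidableEq (β i)]
    {φ : (∀ i, β i) → V}
    (hφ : ∀ f i (x : β i), x ≠ f i → G.Adj (φ f) (φ (Function.update f i x)))
    (f g : ∀ i, β i) : G.dist (φ f) (φ g) ≤ hammingDist f g := by
  have key : ∀ T : Finset ι, ∃ p : G.Walk (φ f) (φ (T.piecewise g f)), p.length ≤ T.card := by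
    intro T
    induction T using Finset.induction_on with
    | empty => exact ⟨Walk.nil.copy rfl (by rw [Finset.piecewise_empty]), by simp⟩
    | insert j T hj ih =>
      obtain ⟨p, hp⟩ := ih
      rw [Finset.piecewise_insert, Finset.card_insert_of_notMem hj]
      by_cases hgj : g j = T.piecewise g f j
      · rw [Function.update_eq_self_iff.mpr hgj]
        exact ⟨p, by omega⟩
      · exact ⟨p.concat (hφ _ j _ hgj), by rw [Walk.length_concat]; omega⟩
  obtain ⟨p, hp⟩ := key {i | f i ≠ g i}
  have hg : ({i | f i ≠ g i} : Finset ι).piecewise g f = g := by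
    ext i
    by_cases hi : f i = g i <;> simp [Finset.piecewise, hi]
  exact (dist_le (p.copy rfl (congrArg φ hg))).trans (by simpa [hammingDist] using hp)

def IsHammingEmbedding (G : SimpleGraph V) (φ : (∀ i, β i) → V) : Prop :=
  Function.Injective φ ∧ ∀ f g, f ≠ g → (G.Adj (φ f) (φ g) ↔ ∃! i, f i ≠ g i)

lemma IsPrism.exists_isHammingEmbedding {P : Set V} (hP : IsPrism G P) :
    ∃ (k : ℕ) (S : Fin k → Set V) (φ : (∀ i, S i) → V),
      IsHammingEmbedding G φ ∧ Set.range φ = P := by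
  obtain ⟨k, S, φ, -, -, hinj, hrange, hadj⟩ := hP
  exact ⟨k, S, φ, ⟨hinj, fun f g hfg => by simpa [Subtype.coe_inj] using hadj f g hfg⟩, hrange⟩

namespace IsHammingEmbedding

variable {φ : (∀ i, β i) → V} {f : ∀ i, β i} {i j : ι}

lemma adj_update [DecidableEq ι] (h : IsHammingEmbedding G φ) {x : β i} (hx : x ≠ f i) :
    G.Adj (φ f) (φ (Function.update f i x)) := by
  have hne : f ≠ Function.update f i x := fun e => hx (by rw [e, Function.update_self])
  refine ((h.2 _ _ hne).mpr ⟨i, by simpa using hx.symm, fun j hj => ?_⟩)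
  by_contra hji
  simp [Function.update_of_ne hji] at hj

lemma not_adj (h : IsHammingEmbedding G φ) {g : ∀ i, β i} (hij : i ≠ j) (hi : f i ≠ g i)
    (hj : f j ≠ g j) : ¬ G.Adj (φ f) (φ g) := by
  intro hadj
  obtain ⟨l, -, hl⟩ := (h.2 f g fun e => hi (congrFun e i)).mp hadj
  exact hij ((hl i hi).trans (hl j hj).symm)

lemma squareCorner_update [DecidableEq ι] (h : IsHammingEmbedding G φ) (hij : i ≠ j)
    {x : β i} {y : β j} (hx : x ≠ f i) (hy : y ≠ f j) :
    SquareCorner G Set.univ s(φ f, φ (Function.update f i x)) s(φ f, φ (Function.update f j y)) :=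
  ⟨_, _, _, φ (Function.update (Function.update f i x) j y), trivial, trivial, trivial, trivial,
    rfl, rfl, h.adj_update hx, h.adj_update hy,
    h.adj_update (by rwa [Function.update_of_ne hij.symm]),
    Function.update_comm hij x y f ▸ h.adj_update (by rwa [Function.update_of_ne hij]),
    h.not_adj hij (by simpa [Function.update_of_ne hij] using hx.symm) (by simpa using hy.symm),
    h.not_adj hij (by simpa [Function.update_of_ne hij] using hx)
      (by simpa [Function.update_of_ne hij.symm] using hy.symm)⟩

end IsHammingEmbedding

end Prism

section Crossing

variable {G : SimpleGraph V}

def edgeHyp {a b : V} (h : G.Adj a b) : Hyp G :=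
  Quotient.mk (parallelSetoid G) ⟨s(a, b), h⟩

lemma crossingGraph_adj_edgeHyp (hqm : IsQuasiMedian G) {a b c : V} (hab : G.Adj a b)
    (hac : G.Adj a c) (hsq : SquareCorner G Set.univ s(a, b) s(a, c)) (hbc : ¬ G.Adj b c)
    (hne : b ≠ c) : (crossingGraph G).Adj (edgeHyp hab) (edgeHyp hac) :=
  ⟨fun e => not_parallel_of_not_adj hqm hab hac hbc hne (Quotient.exact e), _, _, rfl, rfl, hsq⟩

/-- The hyperplanes dual to the edges leaving `φ f` towards `φ g` along single coordinates
pairwise cross. -/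
lemma IsHammingEmbedding.exists_pairwise_crossing {ι : Type*} [Fintype ι] [DecidableEq ι]
    {β : ι → Type*} [∀ i, DecidableEq (β i)] (hqm : IsQuasiMedian G) {φ : (∀ i, β i) → V}
    (h : IsHammingEmbedding G φ) (f g : ∀ i, β i) :
    ∃ s : Finset (Hyp G), (s : Set (Hyp G)).Pairwise (crossingGraph G).Adj ∧
      s.card = hammingDist f g := by
  let H : {i // f i ≠ g i} → Hyp G := fun i => edgeHyp (h.adj_update (Ne.symm i.2))
  have hH : ∀ i j, i ≠ j → (crossingGraph G).Adj (H i) (H j) := by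
    intro i j hij
    have hij' : i.1 ≠ j.1 := fun e => hij (Subtype.ext e)
    refine crossingGraph_adj_edgeHyp hqm _ _
      (h.squareCorner_update hij' (Ne.symm i.2) (Ne.symm j.2))
      (h.not_adj hij' (by simpa [Function.update_of_ne hij'] using Ne.symm i.2)
        (by simpa [Function.update_of_ne hij'.symm] using j.2)) fun e => i.2 ?_
    simpa [Function.update_of_ne hij'] using (congrFun (h.1 e) i.1).symm
  have hinj : Function.Injective H := fun i j e => by
    by_contra hij
    exact (hH i j hij).ne e
  refine ⟨Finset.univ.map ⟨H, hinj⟩, ?_, ?_⟩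
  · simp only [Finset.coe_map, Finset.coe_univ, Set.image_univ]
    rintro _ ⟨i, rfl⟩ _ ⟨j, rfl⟩ hne
    exact hH i j fun e => hne (congrArg H e)
  · rw [Finset.card_map, Finset.card_univ, Fintype.card_subtype]
    rfl

end Crossing

section FactorSystem

variable {W : Type*} {Γ : SimpleGraph W} {𝔉 : Set (Set W)}

lemma biInter_neighborSet_mem {ι : Type*}
    (hlink : ∀ v, (Γ.neighborSet v).Nonempty → Γ.neighborSet v ∈ 𝔉)
    (hinter : ∀ A ∈ 𝔉, ∀ B ∈ 𝔉, (A ∩ B).Nonempty → A ∩ B ∈ 𝔉) (e : ι → W) {T : Finset ι}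
    (hT : T.Nonempty) (hne : (⋂ j ∈ T, Γ.neighborSet (e j)).Nonempty) :
    (⋂ j ∈ T, Γ.neighborSet (e j)) ∈ 𝔉 := by
  classical
  induction hT using Finset.Nonempty.cons_induction with
  | singleton a =>
    rw [Finset.set_biInter_singleton] at hne ⊢
    exact hlink _ hne
  | cons a T ha hT ih =>
    rw [Finset.cons_eq_insert, Finset.set_biInter_insert] at hne ⊢
    exact hinter _ (hlink _ (hne.mono Set.inter_subset_left)) _
      (ih (hne.mono Set.inter_subset_right)) hne

/-- The common links of the vertices `e j`, `j > i`, of a clique form a strictly increasing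
chain in `𝔉`. -/
lemma exists_strictMono_of_pairwise_adj
    (hlink : ∀ v, (Γ.neighborSet v).Nonempty → Γ.neighborSet v ∈ 𝔉)
    (hinter : ∀ A ∈ 𝔉, ∀ B ∈ 𝔉, (A ∩ B).Nonempty → A ∩ B ∈ 𝔉) {m : ℕ} (e : Fin (m + 1) → W)
    (he : Pairwise fun i j => Γ.Adj (e i) (e j)) :
    ∃ c : Fin m → Set W, StrictMono c ∧ ∀ i, c i ∈ 𝔉 := by
  have hmem : ∀ k (T : Finset (Fin (m + 1))), k ∉ T → e k ∈ ⋂ j ∈ T, Γ.neighborSet (e j) := by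
    intro k T hk
    simp only [Set.mem_iInter, mem_neighborSet]
    exact fun j hj => he (ne_of_mem_of_not_mem hj hk)
  refine ⟨fun i => ⋂ j ∈ Finset.Ioi i.castSucc, Γ.neighborSet (e j), fun i i' hii' => ?_,
    fun i => biInter_neighborSet_mem hlink hinter e ⟨Fin.last m, by simp⟩
      ⟨e i.castSucc, hmem _ _ (by simp)⟩⟩
  have hsub : (⋂ j ∈ Finset.Ioi i.castSucc, Γ.neighborSet (e j)) ⊆
      ⋂ j ∈ Finset.Ioi i'.castSucc, Γ.neighborSet (e j) := by
    simp only [Set.subset_def, Set.mem_iInter, Finset.mem_Ioi]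
    exact fun x hx j hj => hx j ((Fin.castSucc_lt_castSucc_iff.mpr hii').trans hj)
  refine (Set.ssubset_iff_of_subset hsub).mpr ⟨e i'.castSucc, hmem _ _ (by simp), fun h => ?_⟩
  simp only [Set.mem_iInter, Finset.mem_Ioi, mem_neighborSet] at h
  exact Γ.loopless.irrefl _ (h _ (Fin.castSucc_lt_castSucc_iff.mpr hii'))

lemma IsGraphFactorSystem.exists_card_le (h𝔉 : IsGraphFactorSystem Γ Set.univ 𝔉) :
    ∃ n, ∀ s : Finset W, Γ.IsClique s → s.card ≤ n := by
  obtain ⟨-, -, hlink, hinter, n, -, hchain⟩ := h𝔉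
  replace hlink : ∀ v, (Γ.neighborSet v).Nonempty → Γ.neighborSet v ∈ 𝔉 := fun v => by
    have := hlink v trivial
    rwa [Set.sep_univ] at this
  refine ⟨n, fun s hs => ?_⟩
  by_contra! hlt
  let e : Fin (n + 1) → W := fun i => s.equivFin.symm (Fin.castLE hlt i)
  have he : Pairwise fun i j => Γ.Adj (e i) (e j) := fun i j hij =>
    hs (Finset.coe_mem _) (Finset.coe_mem _) <| Subtype.coe_injective.ne <|
      s.equivFin.symm.injective.ne <| (Fin.castLE_injective hlt).ne hij
  obtain ⟨c, hc, hcF⟩ := exists_strictMono_of_pairwise_adj hlink hinter _ he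
  exact (hchain n c hc hcF).false

end FactorSystem

/-- If the crossing graph of a quasi-median graph admits a graph factor system, then
there is a uniform bound on collections of pairwise-crossing hyperplanes, and
consequently every prism has uniformly bounded diameter. -/
theorem bounded_cliques_and_prisms_of_factor_system
    (G : SimpleGraph V) (hqm : IsQuasiMedian G)
    (𝔉 : Set (Set (Hyp G)))
    (h𝔉 : IsGraphFactorSystem (crossingGraph G) Set.univ 𝔉) :
    ∃ n : ℕ,
      (∀ s : Finset (Hyp G),
        (s : Set (Hyp G)).Pairwise (crossingGraph G).Adj → s.card ≤ n) ∧
      (∀ P : Set V, IsPrism G P → ∀ x ∈ P, ∀ y ∈ P, G.dist x y ≤ n) := by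
  classical
  obtain ⟨n, hn⟩ := h𝔉.exists_card_le
  refine ⟨n, hn, fun P hP x hx y hy => ?_⟩
  obtain ⟨k, S, φ, hφ, rfl⟩ := hP.exists_isHammingEmbedding
  obtain ⟨f, rfl⟩ := hx
  obtain ⟨g, rfl⟩ := hy
  obtain ⟨s, hs, hcard⟩ := hφ.exists_pairwise_crossing hqm f g
  calc G.dist (φ f) (φ g) ≤ hammingDist f g := dist_le_hammingDist (fun _ _ _ => hφ.adj_update) f g
    _ = s.card := hcard.symm
    _ ≤ n := hn s hs
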